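/- arXiv:2401.15838 — 4 statements merged into one kernel-verified Lean document; each statement's English description precedes it below -/
import Mathlib

section
/- Let M₊, M₋ be real n × m matrices, let ρ > 0, and define L₊ = (1/2)·M₊·M₊ᵀ, L₋ = (1/2)·M₋·M₋ᵀ, and D = (1/2)·(L₊ + L₋). Let g, w, X, X′ ∈ ℝⁿ and Z, Z′, β, β′ ∈ ℝᵐ satisfy: (i) g + M₋β′ + √2·D·w = ρ·M₊·(Z − Z′); (ii) β′ = β + (ρ/2)·M₋ᵀ·X′; (iii) Z = (1/2)·M₊ᵀ·X; (iv) Z′ = (1/2)·M₊ᵀ·X′. Then, setting p = M₋β and p′ = M₋β′, it holds that g + p − ρ·L₊·X + 2ρ·D·X′ + √2·D·w = 0 and p′ = p + ρ·L₋·X′. -/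
open Matrix

lemma Matrix.mulVec_smul_transpose_mulVec {ι κ R : Type*} [Fintype ι] [Fintype κ]
    [CommSemiring R] (M : Matrix ι κ R) (c : R) (x : ι → R) :
    M *ᵥ (c • Mᵀ *ᵥ x) = (c • (M * Mᵀ)) *ᵥ x := by
  rw [mulVec_smul, mulVec_mulVec, smul_mulVec]

theorem stmt_3_general {n m : ℕ} (Mp Mm : Matrix (Fin n) (Fin m) ℝ) (ρ : ℝ)
    (Lp Lm D : Matrix (Fin n) (Fin n) ℝ)
    (hLp : Lp = (1 / 2 : ℝ) • (Mp * Mpᵀ))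
    (hLm : Lm = (1 / 2 : ℝ) • (Mm * Mmᵀ))
    (hD : D = (1 / 2 : ℝ) • (Lp + Lm))
    (g w X X' : Fin n → ℝ) (Z Z' β β' : Fin m → ℝ)
    (hi : g + Mm.mulVec β' + Real.sqrt 2 • D.mulVec w = ρ • Mp.mulVec (Z - Z'))
    (hii : β' = β + (ρ / 2) • Mmᵀ.mulVec X')
    (hiii : Z = (1 / 2 : ℝ) • Mpᵀ.mulVec X)
    (hiv : Z' = (1 / 2 : ℝ) • Mpᵀ.mulVec X')
    (p p' : Fin n → ℝ) (hp : p = Mm.mulVec β) (hp' : p' = Mm.mulVec β') :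
    g + p - ρ • Lp.mulVec X + (2 * ρ) • D.mulVec X' + Real.sqrt 2 • D.mulVec w = 0 ∧
      p' = p + ρ • Lm.mulVec X' := by
  have hdual : p' = p + ρ • Lm *ᵥ X' := by
    rw [hp', hp, hii, mulVec_add, div_eq_mul_one_div, mul_smul, mulVec_smul,
      mulVec_smul_transpose_mulVec, hLm]
  have hprimal : ρ • Mp *ᵥ (Z - Z') = ρ • Lp *ᵥ X - ρ • Lp *ᵥ X' := by
    rw [hiii, hiv, mulVec_sub, mulVec_smul_transpose_mulVec, mulVec_smul_transpose_mulVec, hLp,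
      smul_sub]
  have hDX' : (2 * ρ) • D *ᵥ X' = ρ • Lp *ᵥ X' + ρ • Lm *ᵥ X' := by
    rw [hD, smul_mulVec, add_mulVec, smul_smul]
    module
  refine ⟨?_, hdual⟩
  rw [← hp', hprimal] at hi
  rw [hDX']
  linear_combination (norm := module) hi - hdual

theorem stmt_3 {n m : ℕ} (Mp Mm : Matrix (Fin n) (Fin m) ℝ) (ρ : ℝ) (hρ : 0 < ρ)
    (Lp Lm D : Matrix (Fin n) (Fin n) ℝ)
    (hLp : Lp = (1 / 2 : ℝ) • (Mp * Mpᵀ))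
    (hLm : Lm = (1 / 2 : ℝ) • (Mm * Mmᵀ))
    (hD : D = (1 / 2 : ℝ) • (Lp + Lm))
    (g w X X' : Fin n → ℝ) (Z Z' β β' : Fin m → ℝ)
    (hi : g + Mm.mulVec β' + Real.sqrt 2 • D.mulVec w = ρ • Mp.mulVec (Z - Z'))
    (hii : β' = β + (ρ / 2) • Mmᵀ.mulVec X')
    (hiii : Z = (1 / 2 : ℝ) • Mpᵀ.mulVec X)
    (hiv : Z' = (1 / 2 : ℝ) • Mpᵀ.mulVec X')
    (p p' : Fin n → ℝ) (hp : p = Mm.mulVec β) (hp' : p' = Mm.mulVec β') :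
    g + p - ρ • Lp.mulVec X + (2 * ρ) • D.mulVec X' + Real.sqrt 2 • D.mulVec w = 0 ∧
      p' = p + ρ • Lm.mulVec X' :=
  stmt_3_general Mp Mm ρ Lp Lm D hLp hLm hD g w X X' Z Z' β β' hi hii hiii hiv p p' hp hp'
end

section
/- Let M₊, M₋ be real n × m matrices, ρ > 0, m_f > 0, and let h, X′, X*, v ∈ ℝⁿ and Z, Z′, Z*, β, β′, β* ∈ ℝᵐ satisfy: (i) ⟨h, X′ − X*⟩ ≥ m_f‖X′ − X*‖²; (ii) h = ρ·M₊·(Z − Z′) − M₋·(β′ − β*) − √2·v; (iii) β′ − β = (ρ/2)·M₋ᵀ·(X′ − X*); (iv) Z′ − Z* = (1/2)·M₊ᵀ·(X′ − X*). Define the G-norm on pairs of vectors by ‖(z, b)‖_G² := ρ‖z‖² + (1/ρ)‖b‖². Then m_f‖X′ − X*‖² ≤ ‖(Z − Z*, β − β*)‖_G² − ‖(Z′ − Z*, β′ − β*)‖_G² − ‖(Z − Z′, β − β′)‖_G² − √2·⟨X′ − X*, v⟩. -/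
open Matrix

/-! Pair (ii) with `X' - Xs` and move both matrices across the inner product: by (iii) and (iv) the
transposes turn `X' - Xs` back into the increments `β' - β` and `Z' - Zs`. The three-point identity
`2⟪a - b, b - c⟫ = ‖a - c‖² - ‖b - c‖² - ‖a - b‖²` then rewrites `⟪h, X' - Xs⟫` *exactly* as the
right-hand side, and (i) bounds it from below. -/

theorem Matrix.inner_toEuclideanLin_transpose {m n : Type*} [Fintype m] [Fintype n]
    [DecidableEq m] [DecidableEq n] (A : Matrix m n ℝ) (x : EuclideanSpace ℝ n)
    (y : EuclideanSpace ℝ m) :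
    inner ℝ (A.toEuclideanLin x) y = inner ℝ x (Aᵀ.toEuclideanLin y) := by
  rw [← conjTranspose_eq_transpose_of_trivial, toEuclideanLin_conjTranspose_eq_adjoint,
    LinearMap.adjoint_inner_right]

theorem two_mul_real_inner_sub_sub_eq {E : Type*} [NormedAddCommGroup E] [InnerProductSpace ℝ E]
    (a b c : E) :
    2 * inner ℝ (a - b) (b - c) = ‖a - c‖ ^ 2 - ‖b - c‖ ^ 2 - ‖a - b‖ ^ 2 := by
  rw [← sub_add_sub_cancel a b c, norm_add_sq_real]
  ring

theorem stmt_4_general {n m : ℕ} (Mp Mm : Matrix (Fin n) (Fin m) ℝ) (ρ mf : ℝ)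
    (hρ : 0 < ρ)
    (h X' Xs v : EuclideanSpace ℝ (Fin n)) (Z Z' Zs β β' βs : EuclideanSpace ℝ (Fin m))
    (hi : (inner ℝ h (X' - Xs) : ℝ) ≥ mf * ‖X' - Xs‖ ^ 2)
    (hii : h = ρ • Mp.toEuclideanLin (Z - Z') - Mm.toEuclideanLin (β' - βs)
      - Real.sqrt 2 • v)
    (hiii : β' - β = (ρ / 2) • Mmᵀ.toEuclideanLin (X' - Xs))
    (hiv : Z' - Zs = (1 / 2 : ℝ) • Mpᵀ.toEuclideanLin (X' - Xs)) :
    mf * ‖X' - Xs‖ ^ 2 ≤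
      (ρ * ‖Z - Zs‖ ^ 2 + (1 / ρ) * ‖β - βs‖ ^ 2)
      - (ρ * ‖Z' - Zs‖ ^ 2 + (1 / ρ) * ‖β' - βs‖ ^ 2)
      - (ρ * ‖Z - Z'‖ ^ 2 + (1 / ρ) * ‖β - β'‖ ^ 2)
      - Real.sqrt 2 * (inner ℝ (X' - Xs) v : ℝ) := by
  have hZ : 2 * inner ℝ (Z - Z') (Z' - Zs)
      = inner ℝ (Mp.toEuclideanLin (Z - Z')) (X' - Xs) := by
    rw [Mp.inner_toEuclideanLin_transpose, hiv, real_inner_smul_right]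
    ring
  have hβ : 2 * inner ℝ (β - β') (β' - βs)
      = -ρ * inner ℝ (Mm.toEuclideanLin (β' - βs)) (X' - Xs) := by
    rw [Mm.inner_toEuclideanLin_transpose, ← neg_sub β' β, inner_neg_left, hiii,
      real_inner_smul_left, real_inner_comm]
    ring
  rw [two_mul_real_inner_sub_sub_eq] at hZ hβ
  have hρ' : ρ * (1 / ρ) = 1 := mul_one_div_cancel hρ.ne'
  calc mf * ‖X' - Xs‖ ^ 2 ≤ inner ℝ h (X' - Xs) := hi
    _ = _ := by
      rw [hii, inner_sub_left, inner_sub_left, real_inner_smul_left, real_inner_smul_left,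
        real_inner_comm (X' - Xs) v]
      linear_combination -ρ * hZ - (1 / ρ) * hβ
        + inner ℝ (Mm.toEuclideanLin (β' - βs)) (X' - Xs) * hρ'

theorem stmt_4 {n m : ℕ} (Mp Mm : Matrix (Fin n) (Fin m) ℝ) (ρ mf : ℝ)
    (hρ : 0 < ρ) (hmf : 0 < mf)
    (h X' Xs v : EuclideanSpace ℝ (Fin n)) (Z Z' Zs β β' βs : EuclideanSpace ℝ (Fin m))
    (hi : (inner ℝ h (X' - Xs) : ℝ) ≥ mf * ‖X' - Xs‖ ^ 2)
    (hii : h = ρ • Mp.toEuclideanLin (Z - Z') - Mm.toEuclideanLin (β' - βs)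
      - Real.sqrt 2 • v)
    (hiii : β' - β = (ρ / 2) • Mmᵀ.toEuclideanLin (X' - Xs))
    (hiv : Z' - Zs = (1 / 2 : ℝ) • Mpᵀ.toEuclideanLin (X' - Xs)) :
    mf * ‖X' - Xs‖ ^ 2 ≤
      (ρ * ‖Z - Zs‖ ^ 2 + (1 / ρ) * ‖β - βs‖ ^ 2)
      - (ρ * ‖Z' - Zs‖ ^ 2 + (1 / ρ) * ‖β' - βs‖ ^ 2)
      - (ρ * ‖Z - Z'‖ ^ 2 + (1 / ρ) * ‖β - β'‖ ^ 2)
      - Real.sqrt 2 * (inner ℝ (X' - Xs) v : ℝ) :=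
  stmt_4_general Mp Mm ρ mf hρ h X' Xs v Z Z' Zs β β' βs hi hii hiii hiv
end

section
/- Let M₊, M₋ be real n × m matrices, ρ > 0, M_f > 0, κ > 1, s₊ > 0, s₋ > 0, and let h, X′, X*, v ∈ ℝⁿ and Z, Z′, β′, β* ∈ ℝᵐ satisfy: (i) ‖h‖ ≤ M_f‖X′ − X*‖; (ii) h = ρ·M₊·(Z − Z′) − M₋·(β′ − β*) − √2·v; (iii) ‖M₊·u‖ ≤ s₊‖u‖ for all u ∈ ℝᵐ; (iv) s₋·‖β′ − β*‖ ≤ ‖M₋·(β′ − β*)‖. Then (ρκs₊²/((κ−1)s₋²))·‖Z′ − Z‖² + (κM_f²/(ρs₋²))·‖X′ − X*‖² ≥ (1/ρ)·‖β′ − β*‖² − (2√2/(ρs₋²))·‖M₋·(β′ − β*)‖·‖v‖ + (2/(ρs₋²))·‖v‖². -/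
open Matrix

/-! Rearranging (ii) as `M₋(β' - β*) + √2 v = ρ M₊(Z - Z') - h` bounds its norm by
`ρ s₊ ‖Z' - Z‖ + M_f ‖X' - X*‖`. Square both sides: on the left use the reverse triangle
inequality and then (iv); on the right use the weighted Young inequality
`(p + q)² ≤ κ/(κ-1) p² + κ q²`. Dividing by `ρ s₋²` gives the claim. -/

theorem add_sq_le_div_sub_one_mul_add_mul {κ : ℝ} (hκ : 1 < κ) (p q : ℝ) :
    (p + q) ^ 2 ≤ κ / (κ - 1) * p ^ 2 + κ * q ^ 2 := by
  have hκ1 : 0 < κ - 1 := by linarith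
  rw [div_mul_eq_mul_div, div_add' _ _ _ hκ1.ne', le_div_iff₀ hκ1]
  nlinarith [sq_nonneg (p - (κ - 1) * q)]

theorem sq_norm_sub_two_mul_add_le_sq_norm_add_smul {E : Type*} [SeminormedAddCommGroup E]
    [NormedSpace ℝ E] (a v : E) {c : ℝ} (hc : 0 ≤ c) :
    ‖a‖ ^ 2 - 2 * c * ‖a‖ * ‖v‖ + c ^ 2 * ‖v‖ ^ 2 ≤ ‖a + c • v‖ ^ 2 := by
  have h := abs_le.mp (abs_norm_sub_norm_le a (-(c • v)))
  rw [norm_neg, sub_neg_eq_add, norm_smul, Real.norm_of_nonneg hc] at h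
  linear_combination sq_le_sq' h.1 h.2

theorem stmt_6_general {n m : ℕ} (Mp Mm : Matrix (Fin n) (Fin m) ℝ) (ρ Mf κ sp sm : ℝ)
    (hρ : 0 < ρ) (hκ : 1 < κ) (hsm : 0 < sm)
    (h X' Xs v : EuclideanSpace ℝ (Fin n)) (Z Z' β' βs : EuclideanSpace ℝ (Fin m))
    (hi : ‖h‖ ≤ Mf * ‖X' - Xs‖)
    (hii : h = ρ • Mp.toEuclideanLin (Z - Z') - Mm.toEuclideanLin (β' - βs)
      - Real.sqrt 2 • v)
    (hiii : ∀ u : EuclideanSpace ℝ (Fin m), ‖Mp.toEuclideanLin u‖ ≤ sp * ‖u‖)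
    (hiv : sm * ‖β' - βs‖ ≤ ‖Mm.toEuclideanLin (β' - βs)‖) :
    (ρ * κ * sp ^ 2 / ((κ - 1) * sm ^ 2)) * ‖Z' - Z‖ ^ 2
      + (κ * Mf ^ 2 / (ρ * sm ^ 2)) * ‖X' - Xs‖ ^ 2 ≥
    (1 / ρ) * ‖β' - βs‖ ^ 2
      - (2 * Real.sqrt 2 / (ρ * sm ^ 2)) * ‖Mm.toEuclideanLin (β' - βs)‖ * ‖v‖
      + (2 / (ρ * sm ^ 2)) * ‖v‖ ^ 2 := by
  set A := Mm.toEuclideanLin (β' - βs)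
  have hA : A + Real.sqrt 2 • v = ρ • Mp.toEuclideanLin (Z - Z') - h := by
    rw [hii]; abel
  have hupper : ‖A + Real.sqrt 2 • v‖ ≤ ρ * sp * ‖Z' - Z‖ + Mf * ‖X' - Xs‖ := by
    rw [hA, mul_assoc, ← norm_sub_rev Z]
    calc _ ≤ ‖ρ • Mp.toEuclideanLin (Z - Z')‖ + ‖h‖ := norm_sub_le _ _
      _ ≤ _ := by
        rw [norm_smul, Real.norm_of_nonneg hρ.le]
        gcongr
        exact hiii _
  have hlower : ‖A‖ ^ 2 - 2 * Real.sqrt 2 * ‖A‖ * ‖v‖ + 2 * ‖v‖ ^ 2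
      ≤ ‖A + Real.sqrt 2 • v‖ ^ 2 := by
    simpa only [Real.sq_sqrt zero_le_two] using
      sq_norm_sub_two_mul_add_le_sq_norm_add_smul A v (Real.sqrt_nonneg 2)
  have hβ : sm ^ 2 * ‖β' - βs‖ ^ 2 ≤ ‖A‖ ^ 2 := by
    rw [← mul_pow]
    exact pow_le_pow_left₀ (by positivity) hiv 2
  have key : sm ^ 2 * ‖β' - βs‖ ^ 2 - 2 * Real.sqrt 2 * ‖A‖ * ‖v‖ + 2 * ‖v‖ ^ 2
      ≤ κ / (κ - 1) * (ρ * sp * ‖Z' - Z‖) ^ 2 + κ * (Mf * ‖X' - Xs‖) ^ 2 :=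
    calc _ ≤ ‖A + Real.sqrt 2 • v‖ ^ 2 := by linarith
      _ ≤ (ρ * sp * ‖Z' - Z‖ + Mf * ‖X' - Xs‖) ^ 2 :=
        pow_le_pow_left₀ (norm_nonneg _) hupper 2
      _ ≤ _ := add_sq_le_div_sub_one_mul_add_mul hκ _ _
  have hκ1 : κ - 1 ≠ 0 := by linarith
  rw [ge_iff_le]
  calc _ = (sm ^ 2 * ‖β' - βs‖ ^ 2 - 2 * Real.sqrt 2 * ‖A‖ * ‖v‖ + 2 * ‖v‖ ^ 2)
        / (ρ * sm ^ 2) := by field_simp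
    _ ≤ (κ / (κ - 1) * (ρ * sp * ‖Z' - Z‖) ^ 2 + κ * (Mf * ‖X' - Xs‖) ^ 2)
        / (ρ * sm ^ 2) := by gcongr
    _ = _ := by field_simp

theorem stmt_6 {n m : ℕ} (Mp Mm : Matrix (Fin n) (Fin m) ℝ) (ρ Mf κ sp sm : ℝ)
    (hρ : 0 < ρ) (hMf : 0 < Mf) (hκ : 1 < κ) (hsp : 0 < sp) (hsm : 0 < sm)
    (h X' Xs v : EuclideanSpace ℝ (Fin n)) (Z Z' β' βs : EuclideanSpace ℝ (Fin m))
    (hi : ‖h‖ ≤ Mf * ‖X' - Xs‖)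
    (hii : h = ρ • Mp.toEuclideanLin (Z - Z') - Mm.toEuclideanLin (β' - βs)
      - Real.sqrt 2 • v)
    (hiii : ∀ u : EuclideanSpace ℝ (Fin m), ‖Mp.toEuclideanLin u‖ ≤ sp * ‖u‖)
    (hiv : sm * ‖β' - βs‖ ≤ ‖Mm.toEuclideanLin (β' - βs)‖) :
    (ρ * κ * sp ^ 2 / ((κ - 1) * sm ^ 2)) * ‖Z' - Z‖ ^ 2
      + (κ * Mf ^ 2 / (ρ * sm ^ 2)) * ‖X' - Xs‖ ^ 2 ≥
    (1 / ρ) * ‖β' - βs‖ ^ 2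
      - (2 * Real.sqrt 2 / (ρ * sm ^ 2)) * ‖Mm.toEuclideanLin (β' - βs)‖ * ‖v‖
      + (2 / (ρ * sm ^ 2)) * ‖v‖ ^ 2 :=
  stmt_6_general Mp Mm ρ Mf κ sp sm hρ hκ hsm h X' Xs v Z Z' β' βs hi hii hiii hiv
end

section
/- Let τ_G > 0 and τ_f > 0 be real numbers. Then for every real κ > 1, min{ (κ − 1)/(κ·τ_G²), 1/(√κ·τ_f·τ_G) } ≤ (1/(2τ_f))·√(1/τ_f² + 4/τ_G²) − 1/(2τ_f²). -/
/-!
The optimal value `δ` is the positive root of `τ_G² δ + τ_f² τ_G² δ² = 1`. If both terms of the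
minimum exceeded `δ`, the first inequality would give `κ (δ τ_f τ_G)² > 1` (since
`1 - δ τ_G² = (δ τ_f τ_G)²`) while the second gives `κ (δ τ_f τ_G)² < 1` after squaring.
-/

noncomputable section

namespace ContractionRate

/-- The paper's `δ_max`. -/
def maxRate (τG τf : ℝ) : ℝ :=
  (1 / (2 * τf)) * Real.sqrt (1 / τf ^ 2 + 4 / τG ^ 2) - 1 / (2 * τf ^ 2)

variable {τG τf : ℝ}

lemma maxRate_nonneg (hτf : 0 < τf) : 0 ≤ maxRate τG τf := by
  have hsqrt : 1 / τf ≤ Real.sqrt (1 / τf ^ 2 + 4 / τG ^ 2) := by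
    rw [← Real.sqrt_sq (one_div_pos.mpr hτf).le, div_pow, one_pow]
    exact Real.sqrt_le_sqrt (le_add_of_nonneg_right (by positivity))
  have hleft : 1 / (2 * τf ^ 2) = 1 / (2 * τf) * (1 / τf) := by field_simp
  rw [maxRate, sub_nonneg, hleft]
  exact mul_le_mul_of_nonneg_left hsqrt (by positivity)

lemma maxRate_mul_sq_add_sq_eq_one (hτG : 0 < τG) (hτf : 0 < τf) :
    maxRate τG τf * τG ^ 2 + (maxRate τG τf * τf * τG) ^ 2 = 1 := by
  obtain ⟨s, hs, hsq⟩ : ∃ s, Real.sqrt (1 / τf ^ 2 + 4 / τG ^ 2) = s ∧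
      s ^ 2 = 1 / τf ^ 2 + 4 / τG ^ 2 := ⟨_, rfl, Real.sq_sqrt (by positivity)⟩
  rw [maxRate, hs]
  field_simp
  field_simp at hsq
  linear_combination hsq

lemma min_le_of_mul_sq_add_sq_eq_one (hτG : 0 < τG) (hτf : 0 < τf) {κ δ : ℝ} (hκ : 0 < κ)
    (hδ : 0 ≤ δ) (hroot : δ * τG ^ 2 + (δ * τf * τG) ^ 2 = 1) :
    min ((κ - 1) / (κ * τG ^ 2)) (1 / (Real.sqrt κ * τf * τG)) ≤ δ := by
  by_contra! hδ_lt
  obtain ⟨hfirst, hsecond⟩ := lt_min_iff.mp hδ_lt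
  have hsqrtκ : Real.sqrt κ ^ 2 = κ := Real.sq_sqrt hκ.le
  have hgt : 1 < κ * (δ * τf * τG) ^ 2 := by
    rw [lt_div_iff₀ (by positivity)] at hfirst
    linear_combination hfirst - κ * hroot
  have hlt : δ * Real.sqrt κ * τf * τG < 1 := by
    rw [lt_div_iff₀ (by positivity)] at hsecond
    linarith
  have hlt_sq : (δ * Real.sqrt κ * τf * τG) ^ 2 < 1 :=
    (sq_lt_one_iff₀ (by positivity)).mpr hlt
  have hsq_eq : (δ * Real.sqrt κ * τf * τG) ^ 2 = κ * (δ * τf * τG) ^ 2 := by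
    rw [mul_pow, mul_pow, mul_pow, hsqrtκ]
    ring
  linarith

end ContractionRate

end

theorem stmt_17 (τG τf : ℝ) (hτG : 0 < τG) (hτf : 0 < τf) :
    ∀ κ : ℝ, 1 < κ →
      min ((κ - 1) / (κ * τG ^ 2)) (1 / (Real.sqrt κ * τf * τG)) ≤
        (1 / (2 * τf)) * Real.sqrt (1 / τf ^ 2 + 4 / τG ^ 2) - 1 / (2 * τf ^ 2) := by
  intro κ hκ
  exact ContractionRate.min_le_of_mul_sq_add_sq_eq_one hτG hτf (by linarith)
    (ContractionRate.maxRate_nonneg hτf) (ContractionRate.maxRate_mul_sq_add_sq_eq_one hτG hτf)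
end
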